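/- For any x^L > 0 there exists a unique x_c ≥ 0 with 1 - tanh²(x_c) = (tanh(x_c) - tanh(-x^L))/(x_c + x^L), where uniqueness follows from strict monotonicity of the difference of the two sides on [0, ∞). -/

import Mathlib

/-!
Write `a = xL`. On `x ≥ 0` the tangency equation is equivalent to the vanishing of
`g x = (1 - tanh² x) (x + a) - (tanh x + tanh a)`, whose derivative
`-2 tanh x (1 - tanh² x) (x + a)` is negative for `x > 0`; so `g` is strictly decreasing there,
which gives uniqueness. Existence is the intermediate value theorem: `g 0 = a - tanh a > 0`, and
`g (a + 1) < 0` because `sinh x cosh x > x² ≥ x + a` at `x = a + 1`.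
-/

open Real Set

namespace Real

theorem one_sub_tanh_sq (x : ℝ) : 1 - tanh x ^ 2 = (cosh x ^ 2)⁻¹ := by
  rw [tanh_eq_sinh_div_cosh, div_pow, one_sub_div (by positivity), cosh_sq_sub_sinh_sq, one_div]

theorem hasDerivAt_tanh (x : ℝ) : HasDerivAt tanh (1 - tanh x ^ 2) x := by
  have h : HasDerivAt tanh ((cosh x * cosh x - sinh x * sinh x) / cosh x ^ 2) x := by
    rw [show tanh = sinh / cosh from funext tanh_eq_sinh_div_cosh]
    exact (hasDerivAt_sinh x).div (hasDerivAt_cosh x) (cosh_pos x).ne'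
  refine h.congr_deriv ?_
  rw [one_sub_tanh_sq, ← sq, ← sq, cosh_sq_sub_sinh_sq, one_div]

theorem tanh_pos {x : ℝ} (hx : 0 < x) : 0 < tanh x := by
  rw [tanh_eq_sinh_div_cosh]
  exact div_pos (sinh_pos_iff.mpr hx) (cosh_pos x)

theorem tanh_lt_self {x : ℝ} (hx : 0 < x) : tanh x < x := by
  have hderiv (y : ℝ) : HasDerivAt (fun y => y - tanh y) (tanh y ^ 2) y :=
    ((hasDerivAt_id' y).sub (hasDerivAt_tanh y)).congr_deriv (by ring)
  have hmono : StrictMonoOn (fun y => y - tanh y) (Ici 0) :=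
    strictMonoOn_of_hasDerivWithinAt_pos (convex_Ici 0)
      (fun y _ => (hderiv y).continuousAt.continuousWithinAt)
      (fun y _ => (hderiv y).hasDerivWithinAt)
      (fun y hy => by rw [interior_Ici] at hy; exact pow_pos (tanh_pos hy) 2)
  simpa using hmono self_mem_Ici hx.le hx

theorem sq_lt_sinh_mul_cosh {x : ℝ} (hx : 0 < x) : x ^ 2 < sinh x * cosh x := by
  have hsinh : x < sinh x := self_lt_sinh_iff.mpr hx
  calc x ^ 2 < sinh x * sinh x := by nlinarith
    _ ≤ sinh x * cosh x := mul_le_mul_of_nonneg_left (sinh_lt_cosh x).le (by linarith)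

end Real

/-- Vanishes exactly when the tangent to `tanh` at `x` passes through `(-a, tanh (-a))`. -/
noncomputable def tanhTangencyGap (a x : ℝ) : ℝ :=
  (1 - tanh x ^ 2) * (x + a) - (tanh x - tanh (-a))

theorem hasDerivAt_tanhTangencyGap (a x : ℝ) :
    HasDerivAt (tanhTangencyGap a) (-2 * tanh x * (1 - tanh x ^ 2) * (x + a)) x := by
  have ht := hasDerivAt_tanh x
  have h := (((ht.fun_pow 2).const_sub 1).mul ((hasDerivAt_id' x).add_const a)).sub
    (ht.sub_const (tanh (-a)))
  exact h.congr_deriv (by ring)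

theorem continuous_tanhTangencyGap (a : ℝ) : Continuous (tanhTangencyGap a) :=
  continuous_iff_continuousAt.mpr fun x => (hasDerivAt_tanhTangencyGap a x).continuousAt

theorem strictAntiOn_tanhTangencyGap {a : ℝ} (ha : 0 ≤ a) :
    StrictAntiOn (tanhTangencyGap a) (Ici 0) := by
  refine strictAntiOn_of_hasDerivWithinAt_neg (convex_Ici 0)
    (continuous_tanhTangencyGap a).continuousOn
    (fun x _ => (hasDerivAt_tanhTangencyGap a x).hasDerivWithinAt) fun x hx => ?_
  rw [interior_Ici] at hx
  have hsech : 0 < 1 - tanh x ^ 2 := sub_pos.mpr (tanh_sq_lt_one x)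
  have := mul_pos (mul_pos (tanh_pos hx) hsech) (add_pos_of_pos_of_nonneg hx ha)
  linarith

theorem tanhTangencyGap_zero_pos {a : ℝ} (ha : 0 < a) : 0 < tanhTangencyGap a 0 := by
  simpa [tanhTangencyGap] using tanh_lt_self ha

theorem tanhTangencyGap_add_one_neg {a : ℝ} (ha : 0 < a) : tanhTangencyGap a (a + 1) < 0 := by
  set x := a + 1
  have hx : 0 < x := by positivity
  have hlt : x + a < sinh x * cosh x := by nlinarith [sq_lt_sinh_mul_cosh hx]
  have hgap : (1 - tanh x ^ 2) * (x + a) < tanh x := by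
    rw [one_sub_tanh_sq, tanh_eq_sinh_div_cosh, inv_mul_lt_iff₀ (by positivity)]
    field_simp
    linarith
  have := tanh_pos ha
  simp only [tanhTangencyGap, tanh_neg]
  linarith

theorem tanh_tangency_iff_tanhTangencyGap_eq_zero {a x : ℝ} (hxa : x + a ≠ 0) :
    1 - tanh x ^ 2 = (tanh x - tanh (-a)) / (x + a) ↔ tanhTangencyGap a x = 0 := by
  rw [eq_div_iff hxa, tanhTangencyGap, sub_eq_zero]

theorem existsUnique_nonneg_tanhTangencyGap_eq_zero {a : ℝ} (ha : 0 < a) :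
    ∃! x, 0 ≤ x ∧ tanhTangencyGap a x = 0 := by
  have hroot : 0 ∈ tanhTangencyGap a '' Icc 0 (a + 1) :=
    intermediate_value_Icc' (by positivity) (continuous_tanhTangencyGap a).continuousOn
      ⟨(tanhTangencyGap_add_one_neg ha).le, (tanhTangencyGap_zero_pos ha).le⟩
  obtain ⟨x, ⟨hx, -⟩, hgap⟩ := hroot
  refine ⟨x, ⟨hx, hgap⟩, fun y ⟨hy, hgapy⟩ => ?_⟩
  exact (strictAntiOn_tanhTangencyGap ha.le).injOn hy hx (hgapy.trans hgap.symm)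

theorem tanh_tangency_exists_unique_concave (xL : ℝ) (h : 0 < xL) :
    ∃! xc : ℝ, 0 ≤ xc ∧
      1 - Real.tanh xc ^ 2 = (Real.tanh xc - Real.tanh (-xL)) / (xc + xL) := by
  refine (existsUnique_congr fun x => and_congr_right fun hx => ?_).mpr
    (existsUnique_nonneg_tanhTangencyGap_eq_zero h)
  exact tanh_tangency_iff_tanhTangencyGap_eq_zero (by positivity)
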